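/- arXiv:1212.3582 — 2 statements merged into one kernel-verified Lean document; each statement's English description precedes it below -/
import Mathlib

section
/- In the skew polynomial ring k[X,σ] over a finite field k with automorphism σ of order r, the centre is exactly k^σ[X^r], the ring of polynomials in X^r with coefficients in the fixed field k^σ. -/
/-- A ring `R` together with a ring embedding `ι : k →+* R` and an element `X : R` is
*the* skew polynomial ring `k[X,σ]` if `X * ι a = ι (σ a) * X` for all `a : k` and every
element of `R` can be written uniquely as a finite sum `∑ ι aᵢ * X ^ i`. -/
structure IsSkewPolyRing (k : Type*) [Field k] (σ : k ≃+* k)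
    (R : Type*) [Ring R] (ι : k →+* R) (X : R) : Prop where
  X_mul : ∀ a : k, X * ι a = ι (σ a) * X
  repr_unique : ∀ y : R, ∃! c : ℕ →₀ k, y = c.sum fun i a => ι a * X ^ i

namespace IsSkewPolyRing

variable {k : Type*} [Field k] {σ : k ≃+* k} {R : Type*} [Ring R] {ι : k →+* R} {X : R}

/-- The coefficients of a skew polynomial. -/
noncomputable def repr (h : IsSkewPolyRing k σ R ι X) (y : R) : ℕ →₀ k :=
  (h.repr_unique y).exists.choose

/-- `y` has degree at most `n`. -/
def degLE (h : IsSkewPolyRing k σ R ι X) (y : R) (n : ℕ) : Prop :=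
  ∀ i, n < i → h.repr y i = 0

/-- `y` is monic of degree `d`. -/
def MonicOfDegree (h : IsSkewPolyRing k σ R ι X) (y : R) (d : ℕ) : Prop :=
  h.repr y d = 1 ∧ h.degLE y d

/-- `y` is monic. -/
def Monic (h : IsSkewPolyRing k σ R ι X) (y : R) : Prop := ∃ d, h.MonicOfDegree y d

/-- The matrix of right multiplication by `P` on `k[X,σ]`, viewed as a free module of
rank `r` over `k[X^r]` (identified with `Polynomial k` via `X^r ↦ Y`), in the basis
`1, X, …, X^(r-1)`. -/
noncomputable def normMatrix (h : IsSkewPolyRing k σ R ι X) (r : ℕ) (P : R) :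
    Matrix (Fin r) (Fin r) (Polynomial k) :=
  fun l j => ∑ i ∈ (h.repr P).support,
    if (i + (j : ℕ)) % r = (l : ℕ) then
      Polynomial.monomial ((i + (j : ℕ)) / r) ((σ ^ (j : ℕ)) (h.repr P i))
    else 0

/-- The reduced norm of a skew polynomial `P`: the determinant of right multiplication
by `P` on `k[X,σ]` viewed as a free `k[X^r]`-module of rank `r`, written as a
(commutative) polynomial in the variable `X^r`. -/
noncomputable def norm (h : IsSkewPolyRing k σ R ι X) (r : ℕ) (P : R) : Polynomial k :=
  (h.normMatrix r P).det

end IsSkewPolyRing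

/-- The fixed subfield `k^σ` of an automorphism `σ` of `k`. -/
def fixedSubfield {k : Type*} [Field k] (σ : k ≃+* k) : Subfield k where
  carrier := {a | σ a = a}
  mul_mem' := by intro a b ha hb; simp_all [Set.mem_setOf_eq]
  one_mem' := map_one σ
  add_mem' := by intro a b ha hb; simp_all [Set.mem_setOf_eq]
  zero_mem' := map_zero σ
  neg_mem' := by intro a ha; simp_all [Set.mem_setOf_eq]
  inv_mem' := by intro a ha; simp_all [Set.mem_setOf_eq]

/-- The element of `k[X,σ]` corresponding to a commutative polynomial with
coefficients in the fixed field `k^σ`, via the substitution `Y ↦ X^r`; these are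
exactly the elements of `k^σ[X^r]`. -/
noncomputable def centralElt {k : Type*} [Field k] (σ : k ≃+* k)
    {R : Type*} [Ring R] (ι : k →+* R) (X : R) (r : ℕ)
    (f : Polynomial (fixedSubfield σ)) : R :=
  Polynomial.eval₂ (ι.comp (fixedSubfield σ).subtype) (X ^ r) f

section Aux

variable {k : Type*} [Field k] {σ : k ≃+* k} {R : Type*} [Ring R] {ι : k →+* R} {X : R}

lemma aux_repr_spec (h : IsSkewPolyRing k σ R ι X) (y : R) :
    y = (h.repr y).sum fun i a => ι a * X ^ i :=
  (h.repr_unique y).exists.choose_spec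

lemma aux_sum_inj (h : IsSkewPolyRing k σ R ι X) {c d : ℕ →₀ k}
    (H : (c.sum fun i a => ι a * X ^ i) = d.sum fun i a => ι a * X ^ i) : c = d := by
  obtain ⟨e, _, hu⟩ := h.repr_unique (c.sum fun i a => ι a * X ^ i)
  exact (hu c rfl).trans (hu d H).symm

lemma aux_coeff_ext (h : IsSkewPolyRing k σ R ι X) (s : Finset ℕ) (b b' : ℕ → k)
    (H : ∑ i ∈ s, ι (b i) * X ^ i = ∑ i ∈ s, ι (b' i) * X ^ i) :
    ∀ i ∈ s, b i = b' i := by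
  have mk : ∀ f : ℕ → k, ∀ a : ℕ, (if a ∈ s then f a else 0) ≠ 0 → a ∈ s := by
    intro f a ha
    by_contra h'
    simp [h'] at ha
  set c := Finsupp.onFinset s (fun i => if i ∈ s then b i else 0) (mk b) with hc
  set d := Finsupp.onFinset s (fun i => if i ∈ s then b' i else 0) (mk b') with hd
  have hsum : ∀ f : ℕ → k, ∀ hf,
      (Finsupp.onFinset s (fun i => if i ∈ s then f i else 0) hf).sum
        (fun i a => ι a * X ^ i) = ∑ i ∈ s, ι (f i) * X ^ i := by
    intro f hf
    rw [Finsupp.onFinset_sum _ (fun a => by simp)]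
    exact Finset.sum_congr rfl fun i hi => by rw [if_pos hi]
  have hcd : c = d := by
    apply aux_sum_inj h
    rw [hc, hd, hsum b, hsum b', H]
  intro i hi
  have := congrArg (fun v : ℕ →₀ k => v i) hcd
  simpa [hc, hd, Finsupp.onFinset_apply, if_pos hi] using this

lemma aux_coeff_ext' (h : IsSkewPolyRing k σ R ι X) (s : Finset ℕ) (b b' : ℕ → k)
    (H : ∑ i ∈ s, ι (b i) * X ^ (i + 1) = ∑ i ∈ s, ι (b' i) * X ^ (i + 1)) :
    ∀ i ∈ s, b i = b' i := by
  have hinj : Function.Injective (· + 1 : ℕ → ℕ) := fun a b hab => by simpa using hab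
  have key := aux_coeff_ext h (s.image (· + 1)) (fun j => b (j - 1)) (fun j => b' (j - 1)) ?_
  · intro i hi
    simpa using key (i + 1) (Finset.mem_image_of_mem _ hi)
  · rw [Finset.sum_image (fun a _ b _ hab => hinj hab),
      Finset.sum_image (fun a _ b _ hab => hinj hab)]
    simpa using H

lemma aux_pow_mul (h : IsSkewPolyRing k σ R ι X) (a : k) :
    ∀ m : ℕ, X ^ m * ι a = ι ((σ ^ m) a) * X ^ m
  | 0 => by simp only [pow_zero, mul_one, one_mul]; rfl
  | m + 1 => by
    have : (σ ^ (m + 1)) a = (σ ^ m) (σ a) := by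
      rw [pow_succ]; rfl
    rw [pow_succ, mul_assoc, h.X_mul, ← mul_assoc, aux_pow_mul h (σ a) m, this,
      mul_assoc]

lemma aux_sigma_pow_fix {r : ℕ} (hr : orderOf σ = r) (n : ℕ) (a : k) :
    (σ ^ (r * n)) a = a := by
  have : σ ^ (r * n) = 1 := by
    rw [pow_mul, ← hr, pow_orderOf_eq_one, one_pow]
  rw [this]; rfl

lemma aux_centralElt_central (h : IsSkewPolyRing k σ R ι X) {r : ℕ} (hr : orderOf σ = r)
    (f : Polynomial (fixedSubfield σ)) :
    centralElt σ ι X r f ∈ Subring.center R := by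
  rw [Subring.mem_center_iff]
  set y := centralElt σ ι X r f with hy
  have key : ∀ (c : k) (m n : ℕ), σ c = c → m = r * n →
      Commute (ι c * X ^ m) X ∧ ∀ a : k, Commute (ι c * X ^ m) (ι a) := by
    intro c m n hc hm
    constructor
    · show (ι c * X ^ m) * X = X * (ι c * X ^ m)
      have h1 : X * (ι c * X ^ m) = ι c * (X * X ^ m) := by
        rw [← mul_assoc, h.X_mul, hc, mul_assoc]
      rw [mul_assoc, pow_mul_comm', h1]
    · intro a
      show (ι c * X ^ m) * ι a = ι a * (ι c * X ^ m)
      rw [mul_assoc, aux_pow_mul h, hm, aux_sigma_pow_fix hr, ← mul_assoc, ← map_mul,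
        mul_comm c a, map_mul, mul_assoc]
  have hyX : Commute y X := by
    rw [hy, centralElt, Polynomial.eval₂_eq_sum, Polynomial.sum]
    apply Commute.sum_left
    intro n _
    have := (key ((f.coeff n : k)) (r * n) n (f.coeff n).2 rfl).1
    simpa [pow_mul] using this
  have hyι : ∀ a : k, Commute y (ι a) := by
    intro a
    rw [hy, centralElt, Polynomial.eval₂_eq_sum, Polynomial.sum]
    apply Commute.sum_left
    intro n _
    have := (key ((f.coeff n : k)) (r * n) n (f.coeff n).2 rfl).2 a
    simpa [pow_mul] using this
  intro z
  have hz := aux_repr_spec h z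
  rw [hz, Finsupp.sum_mul, Finsupp.mul_sum]
  refine Finsupp.sum_congr fun i _ => ?_
  exact ((hyι _).symm.mul_left ((hyX.symm).pow_left i)).eq

end Aux

/-- The centre of the skew polynomial ring `k[X,σ]` is exactly `k^σ[X^r]`,
the ring of polynomials in `X^r` with coefficients in the fixed field `k^σ`. -/
theorem center_skewPolyRing_eq {k R : Type*} [Field k] [Fintype k] [Ring R]
    (σ : k ≃+* k) (r : ℕ) (hr : orderOf σ = r) (ι : k →+* R) (X : R)
    (h : IsSkewPolyRing k σ R ι X) (y : R) :
    y ∈ Subring.center R ↔ ∃ f : Polynomial (fixedSubfield σ), y = centralElt σ ι X r f := by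
  constructor
  · intro hy
    set c := h.repr y with hc
    have hyrepr := aux_repr_spec h y
    rw [← hc] at hyrepr
    have hcomm : ∀ g : R, g * y = y * g := Subring.mem_center_iff.mp hy
    have claimA : ∀ i, σ (c i) = c i := by
      have e1 : X * y = ∑ i ∈ c.support, ι (σ (c i)) * X ^ (i + 1) := by
        rw [hyrepr, Finsupp.mul_sum, Finsupp.sum]
        refine Finset.sum_congr rfl fun i _ => ?_
        rw [← mul_assoc, h.X_mul, mul_assoc, ← pow_succ']
      have e2 : y * X = ∑ i ∈ c.support, ι (c i) * X ^ (i + 1) := by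
        rw [hyrepr, Finsupp.sum_mul, Finsupp.sum]
        refine Finset.sum_congr rfl fun i _ => ?_
        rw [mul_assoc, ← pow_succ]
      have key := aux_coeff_ext' h c.support (fun i => σ (c i)) (fun i => c i) (by rw [← e1, ← e2, hcomm X])
      intro i
      by_cases hi : i ∈ c.support
      · exact key i hi
      · rw [Finsupp.notMem_support_iff.mp hi, map_zero]
    have claimB : ∀ a : k, ∀ i, a * c i = c i * (σ ^ i) a := by
      intro a
      have e1 : ι a * y = ∑ i ∈ c.support, ι (a * c i) * X ^ i := by
        rw [hyrepr, Finsupp.mul_sum, Finsupp.sum]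
        refine Finset.sum_congr rfl fun i _ => ?_
        rw [← mul_assoc, ← map_mul]
      have e2 : y * ι a = ∑ i ∈ c.support, ι (c i * (σ ^ i) a) * X ^ i := by
        rw [hyrepr, Finsupp.sum_mul, Finsupp.sum]
        refine Finset.sum_congr rfl fun i _ => ?_
        rw [mul_assoc, aux_pow_mul h, ← mul_assoc, ← map_mul]
      have key := aux_coeff_ext h c.support (fun i => a * c i) (fun i => c i * (σ ^ i) a) (by rw [← e1, ← e2, hcomm (ι a)])
      intro i
      by_cases hi : i ∈ c.support
      · exact key i hi
      · rw [Finsupp.notMem_support_iff.mp hi, zero_mul, mul_zero]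
    have hdvd : ∀ i ∈ c.support, r ∣ i := by
      intro i hi
      have hci : c i ≠ 0 := Finsupp.mem_support_iff.mp hi
      have hfix : ∀ a : k, (σ ^ i) a = a := by
        intro a
        have hB := claimB a i
        rw [mul_comm] at hB
        exact (mul_left_cancel₀ hci hB).symm
      have hone : σ ^ i = 1 := by
        ext a
        simp only [hfix a]
        rfl
      rw [← hr]
      exact orderOf_dvd_of_pow_eq_one hone
    have hmem : ∀ i, c i ∈ fixedSubfield σ := fun i => claimA i
    refine ⟨∑ i ∈ c.support, Polynomial.monomial (i / r) (⟨c i, hmem i⟩ : fixedSubfield σ), ?_⟩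
    rw [centralElt, Polynomial.eval₂_finset_sum, hyrepr, Finsupp.sum]
    refine Finset.sum_congr rfl fun i hi => ?_
    rw [Polynomial.eval₂_monomial, ← pow_mul, Nat.mul_div_cancel' (hdvd i hi)]
    rfl
  · rintro ⟨f, rfl⟩
    exact aux_centralElt_central h hr f
end

section
/- Let N ∈ k^σ[X^r] be a monic irreducible polynomial (viewed as a central element of k[X,σ]) different from X^r. Then the quotient ring k[X,σ]/(N) is a simple ring. -/
namespace IsSkewPolyRing

variable {k : Type*} [Field k] {σ : k ≃+* k} {R : Type*} [Ring R] {ι : k →+* R} {X : R}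

section API
variable (h : IsSkewPolyRing k σ R ι X)

theorem repr_spec (y : R) : y = (h.repr y).sum fun i a => ι a * X ^ i :=
  (h.repr_unique y).exists.choose_spec

theorem repr_eq_of {y : R} {c : ℕ →₀ k} (hy : y = c.sum fun i a => ι a * X ^ i) :
    h.repr y = c :=
  ((h.repr_unique y).unique (h.repr_spec y) hy)

theorem repr_add (y z : R) : h.repr (y + z) = h.repr y + h.repr z := by
  refine h.repr_eq_of ?_
  rw [Finsupp.sum_add_index' (by simp) (by intro i b₁ b₂; rw [map_add, add_mul])]
  rw [← h.repr_spec, ← h.repr_spec]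

theorem repr_iotaX (a : k) (i : ℕ) : h.repr (ι a * X ^ i) = Finsupp.single i a := by
  refine h.repr_eq_of ?_
  rw [Finsupp.sum_single_index (by simp)]

theorem repr_zero : h.repr (0 : R) = 0 := by
  refine h.repr_eq_of ?_; simp [Finsupp.sum_zero_index]

theorem repr_injective : Function.Injective h.repr := by
  intro y z hyz
  rw [h.repr_spec y, h.repr_spec z, hyz]

/-- `repr` as an additive monoid hom. -/
noncomputable def reprHom : R →+ (ℕ →₀ k) where
  toFun := h.repr
  map_zero' := h.repr_zero
  map_add' := h.repr_add

theorem repr_sub (y z : R) : h.repr (y - z) = h.repr y - h.repr z :=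
  map_sub h.reprHom y z

theorem repr_finsum {α : Type*} (s : Finset α) (c : α → k) (g : α → ℕ) :
    h.repr (∑ i ∈ s, ι (c i) * X ^ (g i)) = ∑ i ∈ s, Finsupp.single (g i) (c i) := by
  rw [show h.repr (∑ i ∈ s, ι (c i) * X ^ (g i)) = h.reprHom _ from rfl, map_sum]
  simp only [reprHom, AddMonoidHom.coe_mk, ZeroHom.coe_mk, repr_iotaX]

theorem repr_one : h.repr (1 : R) = Finsupp.single 0 1 := by
  have := h.repr_iotaX 1 0
  simpa using this

/-- Expansion of an element as a finite sum over the support. -/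
theorem expand (y : R) :
    y = ∑ i ∈ (h.repr y).support, ι (h.repr y i) * X ^ i :=
  h.repr_spec y

include h in
theorem X_pow_mul_iota (n : ℕ) (a : k) : X ^ n * ι a = ι ((σ ^ n) a) * X ^ n := by
  induction n with
  | zero => simp only [pow_zero, one_mul, mul_one]; rfl
  | succ n ih =>
      rw [pow_succ', mul_assoc, ih, ← mul_assoc, h.X_mul, mul_assoc, ← pow_succ']
      congr 2
      rw [pow_succ' σ n]
      rfl

include h in
theorem basis_mul (a b : k) (i j : ℕ) :
    (ι a * X ^ i) * (ι b * X ^ j) = ι (a * (σ ^ i) b) * X ^ (i + j) := by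
  rw [mul_assoc, ← mul_assoc (X ^ i), h.X_pow_mul_iota, ← mul_assoc, ← mul_assoc,
    ← map_mul, mul_assoc, ← pow_add]

end API

section Deg
variable (h : IsSkewPolyRing k σ R ι X)

theorem repr_finsum_apply {α : Type*} (s : Finset α) (c : α → k) (g : α → ℕ) (t : ℕ) :
    h.repr (∑ i ∈ s, ι (c i) * X ^ (g i)) t = ∑ i ∈ s, if g i = t then c i else 0 := by
  rw [h.repr_finsum, Finsupp.finset_sum_apply]
  simp [Finsupp.single_apply]

theorem repr_iota_mul (b : k) (y : R) (t : ℕ) :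
    h.repr (ι b * y) t = b * h.repr y t := by
  have e1 : ι b * y = ∑ i ∈ (h.repr y).support, ι (b * h.repr y i) * X ^ i := by
    conv_lhs => rw [h.expand y]
    rw [Finset.mul_sum]
    exact Finset.sum_congr rfl fun i _ => by rw [← mul_assoc, ← map_mul]
  rw [show h.repr (ι b * y) t = h.repr (∑ i ∈ (h.repr y).support,
      ι (b * h.repr y i) * X ^ i) t from by rw [← e1], h.repr_finsum_apply]
  rw [Finset.sum_ite_eq' (h.repr y).support t fun i => b * h.repr y i]
  by_cases ht : t ∈ (h.repr y).support
  · rw [if_pos ht]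
  · rw [if_neg ht, Finsupp.notMem_support_iff.1 ht, mul_zero]

theorem repr_mul_iota (y : R) (a : k) (t : ℕ) :
    h.repr (y * ι a) t = h.repr y t * (σ ^ t) a := by
  have e1 : y * ι a = ∑ i ∈ (h.repr y).support, ι (h.repr y i * (σ ^ i) a) * X ^ i := by
    conv_lhs => rw [h.expand y]
    rw [Finset.sum_mul]
    refine Finset.sum_congr rfl fun i _ => ?_
    rw [mul_assoc, h.X_pow_mul_iota, ← mul_assoc, ← map_mul]
  rw [show h.repr (y * ι a) t = h.repr (∑ i ∈ (h.repr y).support,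
      ι (h.repr y i * (σ ^ i) a) * X ^ i) t from by rw [← e1], h.repr_finsum_apply]
  rw [Finset.sum_ite_eq' (h.repr y).support t fun i => h.repr y i * (σ ^ i) a]
  by_cases ht : t ∈ (h.repr y).support
  · rw [if_pos ht]
  · rw [if_neg ht, Finsupp.notMem_support_iff.1 ht, zero_mul]

theorem repr_X_mul (y : R) (t : ℕ) :
    h.repr (X * y) t = if t = 0 then 0 else σ (h.repr y (t - 1)) := by
  have e1 : X * y = ∑ i ∈ (h.repr y).support, ι (σ (h.repr y i)) * X ^ (i + 1) := by
    conv_lhs => rw [h.expand y]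
    rw [Finset.mul_sum]
    refine Finset.sum_congr rfl fun i _ => ?_
    rw [← mul_assoc, h.X_mul, mul_assoc, ← pow_succ']
  rw [show h.repr (X * y) t = h.repr (∑ i ∈ (h.repr y).support,
      ι (σ (h.repr y i)) * X ^ (i + 1)) t from by rw [← e1], h.repr_finsum_apply]
  cases t with
  | zero => simp
  | succ u =>
      rw [if_neg (Nat.succ_ne_zero u)]
      have : ∀ i ∈ (h.repr y).support, (if i + 1 = u + 1 then σ (h.repr y i) else 0)
          = if i = u then σ (h.repr y i) else 0 := by
        intro i _; simp [Nat.succ_inj]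
      rw [Finset.sum_congr rfl this,
        Finset.sum_ite_eq' (h.repr y).support u fun i => σ (h.repr y i)]
      by_cases ht : u ∈ (h.repr y).support
      · rw [if_pos ht]; rfl
      · rw [if_neg ht]
        simp [Finsupp.notMem_support_iff.1 ht]

theorem repr_mul_X (y : R) (t : ℕ) :
    h.repr (y * X) t = if t = 0 then 0 else h.repr y (t - 1) := by
  have e1 : y * X = ∑ i ∈ (h.repr y).support, ι (h.repr y i) * X ^ (i + 1) := by
    conv_lhs => rw [h.expand y]
    rw [Finset.sum_mul]
    refine Finset.sum_congr rfl fun i _ => ?_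
    rw [mul_assoc, ← pow_succ]
  rw [show h.repr (y * X) t = h.repr (∑ i ∈ (h.repr y).support,
      ι (h.repr y i) * X ^ (i + 1)) t from by rw [← e1], h.repr_finsum_apply]
  cases t with
  | zero => simp
  | succ u =>
      rw [if_neg (Nat.succ_ne_zero u)]
      have : ∀ i ∈ (h.repr y).support, (if i + 1 = u + 1 then h.repr y i else 0)
          = if i = u then h.repr y i else 0 := by
        intro i _; simp [Nat.succ_inj]
      rw [Finset.sum_congr rfl this,
        Finset.sum_ite_eq' (h.repr y).support u fun i => h.repr y i]
      by_cases ht : u ∈ (h.repr y).support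
      · rw [if_pos ht]; rfl
      · rw [if_neg ht]
        simp [Finsupp.notMem_support_iff.1 ht]

theorem repr_mul_of_degLE {y z : R} {n m : ℕ} (hy : h.degLE y n) (hz : h.degLE z m) :
    h.degLE (y * z) (n + m) ∧
      h.repr (y * z) (n + m) = h.repr y n * (σ ^ n) (h.repr z m) := by
  classical
  set s := (h.repr y).support with hs
  set t := (h.repr z).support with hts
  have e1 : y * z = ∑ ij ∈ s ×ˢ t,
      ι (h.repr y ij.1 * (σ ^ ij.1) (h.repr z ij.2)) * X ^ (ij.1 + ij.2) := by
    conv_lhs => rw [h.expand y, h.expand z]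
    rw [Finset.sum_mul_sum, Finset.sum_product]
    exact Finset.sum_congr rfl fun i _ => Finset.sum_congr rfl fun j _ => h.basis_mul _ _ _ _
  have key : ∀ u, h.repr (y * z) u = ∑ ij ∈ s ×ˢ t,
      if ij.1 + ij.2 = u then h.repr y ij.1 * (σ ^ ij.1) (h.repr z ij.2) else 0 := by
    intro u
    rw [show h.repr (y * z) u = h.repr (∑ ij ∈ s ×ˢ t,
      ι (h.repr y ij.1 * (σ ^ ij.1) (h.repr z ij.2)) * X ^ (ij.1 + ij.2)) u from by rw [← e1],
      h.repr_finsum_apply]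
  have hyb : ∀ i ∈ s, i ≤ n := by
    intro i hi
    by_contra hc
    exact (Finsupp.mem_support_iff.1 hi) (hy i (not_le.1 hc))
  have hzb : ∀ j ∈ t, j ≤ m := by
    intro j hj
    by_contra hc
    exact (Finsupp.mem_support_iff.1 hj) (hz j (not_le.1 hc))
  constructor
  · intro u hu
    rw [key u]
    refine Finset.sum_eq_zero fun ij hij => ?_
    rw [Finset.mem_product] at hij
    rw [if_neg]
    have := hyb _ hij.1
    have := hzb _ hij.2
    omega
  · rw [key (n + m)]
    rw [Finset.sum_eq_single ((n, m) : ℕ × ℕ)]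
    · rw [if_pos rfl]
    · intro ij hij hne
      rw [Finset.mem_product] at hij
      rw [if_neg]
      have h1 := hyb _ hij.1
      have h2 := hzb _ hij.2
      intro hc
      exact hne (Prod.ext (by omega) (by omega))
    · intro hnm
      rw [Finset.mem_product] at hnm
      rw [if_pos rfl]
      rcases not_and_or.1 hnm with hn | hm
      · rw [Finsupp.notMem_support_iff.1 hn, zero_mul]
      · rw [Finsupp.notMem_support_iff.1 hm, map_zero, mul_zero]

/-- `y` has degree exactly `n`. -/
def IsDeg (y : R) (n : ℕ) : Prop := h.repr y n ≠ 0 ∧ h.degLE y n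

theorem exists_isDeg {y : R} (hy : y ≠ 0) : ∃ n, h.IsDeg y n := by
  have hne : (h.repr y).support.Nonempty := by
    rw [Finsupp.support_nonempty_iff]
    intro hc
    exact hy (h.repr_injective (by rw [hc, h.repr_zero]))
  refine ⟨(h.repr y).support.max' hne, ?_, ?_⟩
  · exact Finsupp.mem_support_iff.1 ((h.repr y).support.max'_mem hne)
  · intro i hi
    by_contra hc
    exact absurd (Finset.le_max' _ i (Finsupp.mem_support_iff.2 hc)) (not_le.2 hi)

theorem isDeg_unique {y : R} {n n' : ℕ} (h1 : h.IsDeg y n) (h2 : h.IsDeg y n') : n = n' := by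
  rcases lt_trichotomy n n' with hc | hc | hc
  · exact absurd (h1.2 n' hc) h2.1
  · exact hc
  · exact absurd (h2.2 n hc) h1.1

theorem ne_zero_of_isDeg {y : R} {n : ℕ} (h1 : h.IsDeg y n) : y ≠ 0 := by
  intro hc
  exact h1.1 (by rw [hc, h.repr_zero]; rfl)

theorem isDeg_mul {y z : R} {n m : ℕ} (h1 : h.IsDeg y n) (h2 : h.IsDeg z m) :
    h.IsDeg (y * z) (n + m) := by
  obtain ⟨hle, htop⟩ := h.repr_mul_of_degLE h1.2 h2.2
  refine ⟨?_, hle⟩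
  rw [htop]
  refine mul_ne_zero h1.1 fun hc => h2.1 ?_
  have := (σ ^ n).injective (hc.trans (map_zero (σ ^ n)).symm)
  exact this

end Deg

section Div
variable (h : IsSkewPolyRing k σ R ι X)

theorem exists_degLE (y : R) : ∃ n, h.degLE y n := by
  refine ⟨(h.repr y).support.sup id, fun i hi => ?_⟩
  by_contra hc
  exact absurd (Finset.le_sup (f := id) (Finsupp.mem_support_iff.2 hc)) (not_le.2 hi)

theorem div_aux {d : R} {m : ℕ} (hd : h.MonicOfDegree d m) (hm : 1 ≤ m) :
    ∀ n : ℕ, ∀ y : R, h.degLE y n →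
      ∃ q rem : R, y = q * d + rem ∧ ∀ i, m ≤ i → h.repr rem i = 0 := by
  intro n
  induction n using Nat.strong_induction_on with
  | _ n IH =>
    intro y hy
    by_cases hnm : n < m
    · exact ⟨0, y, by rw [zero_mul, zero_add], fun i hi => hy i (lt_of_lt_of_le hnm hi)⟩
    · push_neg at hnm
      set c := h.repr y n with hc
      have hw1 : h.degLE (ι c * X ^ (n - m)) (n - m) := by
        intro i hi
        rw [h.repr_iotaX]
        exact Finsupp.single_eq_of_ne (by omega)
      obtain ⟨hwle, hwtop⟩ := h.repr_mul_of_degLE hw1 hd.2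
      have hnmm : n - m + m = n := Nat.sub_add_cancel hnm
      rw [hnmm] at hwle hwtop
      have hwtop' : h.repr (ι c * X ^ (n - m) * d) n = c := by
        rw [hwtop, h.repr_iotaX, Finsupp.single_eq_same, hd.1, map_one, mul_one]
      have hy' : h.degLE (y - ι c * X ^ (n - m) * d) (n - 1) := by
        intro i hi
        rw [h.repr_sub, Finsupp.sub_apply]
        rcases (by omega : i = n ∨ n < i) with rfl | hi'
        · rw [hwtop']; exact sub_eq_zero.2 rfl
        · rw [hy i hi', hwle i hi', sub_zero]
      obtain ⟨q, rem, heq, hrem⟩ := IH (n - 1) (by omega) _ hy'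
      refine ⟨ι c * X ^ (n - m) + q, rem, ?_, hrem⟩
      rw [add_mul, add_assoc, ← heq]
      abel

theorem div_mod {d : R} {m : ℕ} (hd : h.MonicOfDegree d m) (hm : 1 ≤ m) (y : R) :
    ∃ q rem : R, y = q * d + rem ∧ ∀ i, m ≤ i → h.repr rem i = 0 := by
  obtain ⟨n, hn⟩ := h.exists_degLE y
  exact h.div_aux hd hm n y hn

end Div

end IsSkewPolyRing

section CentralElt

variable {k : Type*} [Field k] {σ : k ≃+* k} {R : Type*} [Ring R] {ι : k →+* R} {X : R}
  {r : ℕ}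

theorem sigma_pow_fix (hσ : σ ^ r = 1) (j : ℕ) (a : k) : (σ ^ (r * j)) a = a := by
  rw [pow_mul, hσ, one_pow]; rfl

theorem sigma_r_fix (hσ : σ ^ r = 1) (a : k) : (σ ^ r) a = a := by
  rw [hσ]; rfl

theorem centralElt_expand (f : Polynomial (fixedSubfield σ)) :
    centralElt σ ι X r f = ∑ j ∈ f.support, ι ((f.coeff j : k)) * X ^ (r * j) := by
  rw [centralElt, Polynomial.eval₂_eq_sum, Polynomial.sum_def]
  exact Finset.sum_congr rfl fun j _ => by rw [RingHom.comp_apply, pow_mul]; rfl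

theorem repr_centralElt (h : IsSkewPolyRing k σ R ι X) (f : Polynomial (fixedSubfield σ))
    (t : ℕ) :
    h.repr (centralElt σ ι X r f) t
      = ∑ j ∈ f.support, if r * j = t then (f.coeff j : k) else 0 := by
  rw [centralElt_expand, h.repr_finsum_apply]

theorem monic_centralElt (h : IsSkewPolyRing k σ R ι X) (hr0 : 0 < r)
    {f : Polynomial (fixedSubfield σ)} (hmon : f.Monic) :
    h.MonicOfDegree (centralElt σ ι X r f) (r * f.natDegree) := by
  constructor
  · rw [repr_centralElt h f, Finset.sum_eq_single f.natDegree]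
    · rw [if_pos rfl, Polynomial.Monic.coeff_natDegree hmon, OneMemClass.coe_one]
    · intro j hj hne
      rw [if_neg fun hc => hne (Nat.eq_of_mul_eq_mul_left hr0 hc)]
    · intro hc
      exact absurd (Polynomial.natDegree_mem_support_of_nonzero hmon.ne_zero) hc
  · intro t ht
    rw [repr_centralElt h f]
    refine Finset.sum_eq_zero fun j hj => ?_
    have hle : j ≤ f.natDegree := Polynomial.le_natDegree_of_mem_supp j hj
    rw [if_neg]
    have : r * j ≤ r * f.natDegree := Nat.mul_le_mul_left r hle
    omega

theorem commute_iota_Xr (h : IsSkewPolyRing k σ R ι X) (hσ : σ ^ r = 1) (a : k) :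
    Commute (ι a) (X ^ r) := by
  unfold Commute SemiconjBy
  rw [h.X_pow_mul_iota, sigma_r_fix hσ]

theorem commute_centralElt_iota (h : IsSkewPolyRing k σ R ι X) (hσ : σ ^ r = 1)
    (f : Polynomial (fixedSubfield σ)) (a : k) :
    Commute (centralElt σ ι X r f) (ι a) := by
  rw [centralElt_expand]
  refine Commute.sum_left _ _ _ fun j _ => ?_
  unfold Commute SemiconjBy
  rw [mul_assoc, h.X_pow_mul_iota, sigma_pow_fix hσ, ← mul_assoc, ← map_mul,
    ← mul_assoc, ← map_mul, mul_comm _ a]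

theorem commute_centralElt_X (h : IsSkewPolyRing k σ R ι X)
    (f : Polynomial (fixedSubfield σ)) :
    Commute (centralElt σ ι X r f) X := by
  rw [centralElt_expand]
  refine Commute.sum_left _ _ _ fun j _ => ?_
  unfold Commute SemiconjBy
  rw [← mul_assoc, h.X_mul, (f.coeff j).2, mul_assoc, mul_assoc, ← pow_succ', ← pow_succ]

theorem commute_centralElt (h : IsSkewPolyRing k σ R ι X) (hσ : σ ^ r = 1)
    (f : Polynomial (fixedSubfield σ)) (z : R) :
    Commute (centralElt σ ι X r f) z := by
  rw [h.expand z]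
  refine Commute.sum_right _ _ _ fun i _ => ?_
  exact (commute_centralElt_iota h hσ f _).mul_right ((commute_centralElt_X h f).pow_right i)

theorem centralElt_mul (h : IsSkewPolyRing k σ R ι X) (hσ : σ ^ r = 1)
    (f g : Polynomial (fixedSubfield σ)) :
    centralElt σ ι X r (f * g) = centralElt σ ι X r f * centralElt σ ι X r g :=
  Polynomial.eval₂_mul_noncomm _ _ fun j => commute_iota_Xr h hσ _

theorem centralElt_one : centralElt σ ι X r (1 : Polynomial (fixedSubfield σ)) = 1 :=
  Polynomial.eval₂_one _ _

theorem centralElt_zero : centralElt σ ι X r (0 : Polynomial (fixedSubfield σ)) = 0 :=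
  Polynomial.eval₂_zero _ _

theorem centralElt_X : centralElt σ ι X r (Polynomial.X) = X ^ r :=
  Polynomial.eval₂_X _ _

end CentralElt

section Minimal

variable {k : Type*} [Field k] {σ : k ≃+* k} {R : Type*} [Ring R] {ι : k →+* R} {X : R}

theorem small_eq_zero (h : IsSkewPolyRing k σ R ι X) (J : TwoSidedIdeal R) {d : ℕ}
    (hmin : ∀ z ∈ J, z ≠ 0 → ∀ n, h.IsDeg z n → d ≤ n)
    {Q : R} (hQJ : Q ∈ J) (hQle : h.degLE Q d) (hQd : h.repr Q d = 0) : Q = 0 := by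
  by_contra hQ0
  obtain ⟨n, hn⟩ := h.exists_isDeg hQ0
  rcases eq_or_lt_of_le (hmin Q hQJ hQ0 n hn) with rfl | h2
  · exact hn.1 hQd
  · exact hn.1 (hQle n h2)

theorem minimal_coeffs (h : IsSkewPolyRing k σ R ι X) (J : TwoSidedIdeal R) {d : ℕ}
    (hmin : ∀ z ∈ J, z ≠ 0 → ∀ n, h.IsDeg z n → d ≤ n)
    {P : R} (hPJ : P ∈ J) (hPle : h.degLE P d) (hPm : h.repr P d = 1) :
    (∀ i, σ (h.repr P i) = h.repr P i) ∧
      (∀ i, h.repr P i ≠ 0 → ∀ a : k, (σ ^ i) a = (σ ^ d) a) := by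
  have hE2 : ∀ (a : k) (i : ℕ), h.repr P i * ((σ ^ d) a - (σ ^ i) a) = 0 := by
    intro a i
    set E := ι ((σ ^ d) a) * P - P * ι a with hE
    have hEJ : E ∈ J := J.sub_mem (J.mul_mem_left _ _ hPJ) (J.mul_mem_right _ _ hPJ)
    have hErepr : ∀ t, h.repr E t = h.repr P t * ((σ ^ d) a - (σ ^ t) a) := by
      intro t
      rw [hE, h.repr_sub, Finsupp.sub_apply, h.repr_iota_mul, h.repr_mul_iota]
      ring
    have hEle : h.degLE E d := fun t ht => by rw [hErepr t, hPle t ht, zero_mul]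
    have hEd : h.repr E d = 0 := by rw [hErepr d, sub_self, mul_zero]
    have hE0 : E = 0 := small_eq_zero h J hmin hEJ hEle hEd
    have h1 := hErepr i
    rw [hE0, h.repr_zero, Finsupp.zero_apply] at h1
    exact h1.symm
  have hE3 : ∀ i, σ (h.repr P i) = h.repr P i := by
    set E := X * P - P * X with hE
    have hEJ : E ∈ J := J.sub_mem (J.mul_mem_left _ _ hPJ) (J.mul_mem_right _ _ hPJ)
    have hErepr : ∀ t, h.repr E t
        = (if t = 0 then 0 else σ (h.repr P (t - 1)) - h.repr P (t - 1)) := by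
      intro t
      rw [hE, h.repr_sub, Finsupp.sub_apply, h.repr_X_mul, h.repr_mul_X]
      by_cases ht : t = 0 <;> simp [ht]
    have hEle : h.degLE E d := by
      intro t ht
      rw [hErepr t]
      rcases Nat.eq_zero_or_pos t with rfl | htpos
      · rw [if_pos rfl]
      · rw [if_neg (by omega)]
        rcases (by omega : t - 1 = d ∨ d < t - 1) with heq | hgt
        · rw [heq, hPm, map_one, sub_self]
        · rw [hPle _ hgt, map_zero, sub_self]
    set c := h.repr E d with hc
    have hE'J : E - ι c * P ∈ J := J.sub_mem hEJ (J.mul_mem_left _ _ hPJ)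
    have hE'le : h.degLE (E - ι c * P) d := fun t ht => by
      rw [h.repr_sub, Finsupp.sub_apply, h.repr_iota_mul, hEle t ht, hPle t ht,
        mul_zero, sub_zero]
    have hE'd : h.repr (E - ι c * P) d = 0 := by
      rw [h.repr_sub, Finsupp.sub_apply, h.repr_iota_mul, hPm, mul_one, sub_self]
    have hE'0 : E - ι c * P = 0 := small_eq_zero h J hmin hE'J hE'le hE'd
    have hEP : ∀ t, h.repr E t = c * h.repr P t := by
      intro t
      have h2 : h.repr (E - ι c * P) t = 0 := by
        rw [hE'0, h.repr_zero, Finsupp.zero_apply]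
      rw [h.repr_sub, Finsupp.sub_apply, h.repr_iota_mul] at h2
      exact sub_eq_zero.1 h2
    have hsupp : (h.repr P).support.Nonempty :=
      ⟨d, Finsupp.mem_support_iff.2 (by rw [hPm]; exact one_ne_zero)⟩
    set e := (h.repr P).support.min' hsupp with he
    have hpe : h.repr P e ≠ 0 :=
      Finsupp.mem_support_iff.1 ((h.repr P).support.min'_mem hsupp)
    have hEe : h.repr E e = 0 := by
      rw [hErepr e]
      rcases Nat.eq_zero_or_pos e with heq | hpos
      · rw [if_pos heq]
      · rw [if_neg (by omega)]
        have hlt : e - 1 ∉ (h.repr P).support := fun hc' => by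
          have := Finset.min'_le _ _ hc'
          omega
        rw [Finsupp.notMem_support_iff.1 hlt, map_zero, sub_self]
    have hc0 : c = 0 := by
      have h3 := hEP e
      rw [hEe] at h3
      rcases mul_eq_zero.1 h3.symm with h1 | h1
      · exact h1
      · exact absurd h1 hpe
    intro i
    have h4 := hEP (i + 1)
    rw [hc0, zero_mul, hErepr (i + 1), if_neg (Nat.succ_ne_zero i)] at h4
    rw [Nat.add_sub_cancel] at h4
    exact sub_eq_zero.1 h4
  refine ⟨hE3, fun i hpi a => ?_⟩
  rcases mul_eq_zero.1 (hE2 a i) with h1 | h1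
  · exact absurd h1 hpi
  · exact (sub_eq_zero.1 h1).symm

theorem minimal_is_central (h : IsSkewPolyRing k σ R ι X) {r : ℕ} (hr : orderOf σ = r)
    (J : TwoSidedIdeal R) {d : ℕ}
    (hmin : ∀ z ∈ J, z ≠ 0 → ∀ n, h.IsDeg z n → d ≤ n)
    {P : R} (hPJ : P ∈ J) (hPle : h.degLE P d) (hPm : h.repr P d = 1) :
    ∃ g : Polynomial (fixedSubfield σ),
      P = centralElt σ ι X r g * X ^ (d % r) ∧ r * g.natDegree ≤ d := by
  classical
  obtain ⟨hfix, hcong⟩ := minimal_coeffs h J hmin hPJ hPle hPm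
  have hdvd : ∀ i ∈ (h.repr P).support, i % r = d % r ∧ i ≤ d := by
    intro i hi
    have hpi := Finsupp.mem_support_iff.1 hi
    have hile : i ≤ d := by
      by_contra hcon
      exact hpi (hPle i (not_le.1 hcon))
    have hpow : σ ^ i = σ ^ d := RingEquiv.ext (hcong i hpi)
    have hsplit : σ ^ d = σ ^ i * σ ^ (d - i) := by
      rw [← pow_add, Nat.add_sub_cancel' hile]
    have h1 : σ ^ (d - i) = 1 := by
      have h2 : σ ^ i * σ ^ (d - i) = σ ^ i * 1 := by
        rw [mul_one, ← hsplit, hpow]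
      exact mul_left_cancel h2
    have hrd : r ∣ d - i := hr ▸ orderOf_dvd_of_pow_eq_one h1
    exact ⟨(Nat.modEq_iff_dvd' hile).2 hrd, hile⟩
  refine ⟨∑ i ∈ (h.repr P).support,
    Polynomial.monomial ((i - d % r) / r) ⟨h.repr P i, hfix i⟩, ?_, ?_⟩
  · rw [centralElt, Polynomial.eval₂_finset_sum, Finset.sum_mul]
    conv_lhs => rw [h.expand P]
    refine Finset.sum_congr rfl fun i hi => ?_
    obtain ⟨hmod, hile⟩ := hdvd i hi
    rw [Polynomial.eval₂_monomial, RingHom.comp_apply, ← pow_mul, mul_assoc, ← pow_add]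
    have h1 : d % r ≤ i := hmod ▸ Nat.mod_le i r
    have h2 : r ∣ i - d % r := hmod ▸ Nat.dvd_sub_mod i
    rw [Nat.mul_div_cancel' h2, Nat.sub_add_cancel h1]
    rfl
  · have hgd : (∑ i ∈ (h.repr P).support,
        Polynomial.monomial ((i - d % r) / r)
          (⟨h.repr P i, hfix i⟩ : fixedSubfield σ)).natDegree ≤ (d - d % r) / r :=
      Polynomial.natDegree_sum_le_of_forall_le _ _ fun i hi =>
        (Polynomial.natDegree_monomial_le _).trans
          (Nat.div_le_div_right (Nat.sub_le_sub_right (hdvd i hi).2 _))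
    calc r * _ ≤ r * ((d - d % r) / r) := Nat.mul_le_mul_left r hgd
      _ ≤ d - d % r := Nat.mul_div_le _ r
      _ ≤ d := Nat.sub_le _ _

end Minimal

/-- If `N ∈ k^σ[X^r]` is monic irreducible and different from `X^r`, then the quotient
ring `k[X,σ]/(N)` is a simple ring. -/
theorem skewPolyRing_quotient_central_irreducible_isSimpleRing
    {k R : Type*} [Field k] [Fintype k] [Ring R]
    (σ : k ≃+* k) (r : ℕ) (hr : orderOf σ = r) (ι : k →+* R) (X : R)
    (h : IsSkewPolyRing k σ R ι X) (f : Polynomial (fixedSubfield σ))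
    (hmon : f.Monic) (hirr : Irreducible f) (hne : f ≠ Polynomial.X) :
    IsSimpleRing ((TwoSidedIdeal.span {centralElt σ ι X r f}).ringCon.Quotient) := by
  classical
  haveI hfin : Finite (k ≃+* k) :=
    Finite.of_injective (fun e => (e : k → k)) DFunLike.coe_injective
  have hr0 : 0 < r := hr ▸ orderOf_pos σ
  have hσ : σ ^ r = 1 := hr ▸ pow_orderOf_eq_one σ
  set N := centralElt σ ι X r f with hNdef
  set m := f.natDegree with hmdef
  have hm1 : 0 < m := hirr.natDegree_pos
  have hNmon : h.MonicOfDegree N (r * m) := monic_centralElt h hr0 hmon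
  have hrm1 : 1 ≤ r * m := Nat.mul_pos hr0 hm1
  set c := (TwoSidedIdeal.span {N}).ringCon with hcdef
  have hNspan : N ∈ TwoSidedIdeal.span {N} := TwoSidedIdeal.subset_span (Set.mem_singleton _)
  -- elements of the span are left multiples of N
  have hspan : ∀ x ∈ TwoSidedIdeal.span {N}, ∃ q, x = q * N := by
    intro x hx
    have hxS := TwoSidedIdeal.mem_span_iff.1 hx
      (TwoSidedIdeal.mk' {y | ∃ q, y = q * N} ⟨0, (zero_mul N).symm⟩
        (fun h1 h2 => by
          obtain ⟨q1, rfl⟩ := h1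
          obtain ⟨q2, rfl⟩ := h2
          exact ⟨q1 + q2, (add_mul _ _ _).symm⟩)
        (fun h1 => by
          obtain ⟨q, rfl⟩ := h1
          exact ⟨-q, (neg_mul _ _).symm⟩)
        (fun {a b} h1 => by
          obtain ⟨q, rfl⟩ := h1
          exact ⟨a * q, (mul_assoc _ _ _).symm⟩)
        (fun {a b} h1 => by
          obtain ⟨q, rfl⟩ := h1
          exact ⟨q * b, by rw [mul_assoc, (commute_centralElt h hσ f b).eq, ← mul_assoc]⟩))
      (by
        intro z hz
        rw [Set.mem_singleton_iff] at hz
        subst hz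
        rw [SetLike.mem_coe, TwoSidedIdeal.mem_mk']
        exact ⟨1, (one_mul N).symm⟩)
    rwa [TwoSidedIdeal.mem_mk'] at hxS
  -- the identity is not in the span
  have h10 : (1 : R) ≠ 0 := by
    intro hc1
    have := congrArg h.repr hc1
    rw [h.repr_one, h.repr_zero] at this
    exact one_ne_zero (by rw [← Finsupp.single_eq_same (a := (0 : ℕ)) (b := (1 : k)), this]; rfl)
  have hdegN : h.IsDeg N (r * m) := ⟨by rw [hNmon.1]; exact one_ne_zero, hNmon.2⟩
  have hdeg1 : h.IsDeg 1 0 :=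
    ⟨by rw [h.repr_one, Finsupp.single_eq_same]; exact one_ne_zero,
     fun i hi => by rw [h.repr_one, Finsupp.single_eq_of_ne (by omega)]⟩
  have hone_not : (1 : R) ∉ TwoSidedIdeal.span {N} := by
    intro hc1
    obtain ⟨q, hq⟩ := hspan 1 hc1
    have hq0 : q ≠ 0 := fun h0 => h10 (by rw [hq, h0, zero_mul])
    obtain ⟨n, hn⟩ := h.exists_isDeg hq0
    have hqN : h.IsDeg (q * N) (n + r * m) := h.isDeg_mul hn hdegN
    rw [← hq] at hqN
    have := h.isDeg_unique hdeg1 hqN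
    omega
  have hQnontriv : (0 : c.Quotient) ≠ 1 := by
    intro hc01
    apply hone_not
    have : c 1 0 := c.eq.1 (by rw [c.coe_one, c.coe_zero, ← hc01])
    exact this
  haveI : Nontrivial (TwoSidedIdeal c.Quotient) := ⟨⊥, ⊤, fun hbt => by
    have h1 : (1 : c.Quotient) ∈ (⊥ : TwoSidedIdeal c.Quotient) := by
      rw [hbt]; exact TwoSidedIdeal.mem_top _
    exact hQnontriv (((TwoSidedIdeal.mem_bot _).1 h1).symm)⟩
  refine ⟨⟨fun I => ?_⟩⟩
  by_cases hI : I = ⊥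
  · exact Or.inl hI
  right
  obtain ⟨x, hxI, hx0⟩ : ∃ x, x ∈ I ∧ x ≠ 0 := by
    by_contra hc2
    push_neg at hc2
    exact hI (eq_bot_iff.2 fun x hx => (TwoSidedIdeal.mem_bot _).2 (hc2 x hx))
  obtain ⟨y, hy⟩ : ∃ y : R, (y : c.Quotient) = x := by
    obtain ⟨y, hy⟩ := Quot.exists_rep x
    exact ⟨y, hy⟩
  set J : TwoSidedIdeal R := TwoSidedIdeal.comap (RingCon.mk' c) I with hJdef
  have hmemJ : ∀ z : R, z ∈ J ↔ ((z : c.Quotient) ∈ I) := fun z => TwoSidedIdeal.mem_comap _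
  have hyJ : y ∈ J := (hmemJ y).2 (by rw [hy]; exact hxI)
  have hcoe_zero : ∀ z : R, z ∈ TwoSidedIdeal.span {N} → (z : c.Quotient) = 0 := by
    intro z hz
    rw [← c.coe_zero]
    exact c.eq.2 hz
  have hyspan : y ∉ TwoSidedIdeal.span {N} := by
    intro hyc
    exact hx0 (by rw [← hy, hcoe_zero y hyc])
  have hNJ : N ∈ J := (hmemJ N).2 (by rw [hcoe_zero N hNspan]; exact I.zero_mem)
  -- a nonzero element of J of degree < r * m
  obtain ⟨q, rem, heq, hrem⟩ := h.div_mod hNmon hrm1 y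
  have hremJ : rem ∈ J := by
    have h5 : rem = y - q * N := by rw [heq]; abel
    rw [h5]
    exact J.sub_mem hyJ (J.mul_mem_left q N hNJ)
  have hrem0 : rem ≠ 0 := by
    intro hc3
    apply hyspan
    rw [heq, hc3, add_zero]
    exact TwoSidedIdeal.mul_mem_left _ q N hNspan
  obtain ⟨n0, hn0⟩ := h.exists_isDeg hrem0
  have hn0lt : n0 < r * m := by
    by_contra hc4
    exact hn0.1 (hrem n0 (not_lt.1 hc4))
  have hex : ∃ n, ∃ z, z ∈ J ∧ z ≠ 0 ∧ h.IsDeg z n := ⟨n0, rem, hremJ, hrem0, hn0⟩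
  set d := Nat.find hex with hddef
  obtain ⟨P0, hP0J, hP00, hP0d⟩ := Nat.find_spec hex
  have hmin : ∀ z ∈ J, z ≠ 0 → ∀ n, h.IsDeg z n → d ≤ n := fun z hz hz0 n hn =>
    Nat.find_min' hex ⟨z, hz, hz0, hn⟩
  have hdlt : d < r * m :=
    lt_of_le_of_lt (Nat.find_min' hex ⟨rem, hremJ, hrem0, hn0⟩) hn0lt
  -- normalize to a monic element
  set u := h.repr P0 d with hu
  have hu0 : u ≠ 0 := hP0d.1
  set P := ι u⁻¹ * P0 with hP
  have hPJ : P ∈ J := J.mul_mem_left _ _ hP0J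
  have hPle : h.degLE P d := fun i hi => by
    rw [hP, h.repr_iota_mul, hP0d.2 i hi, mul_zero]
  have hPm : h.repr P d = 1 := by rw [hP, h.repr_iota_mul, ← hu, inv_mul_cancel₀ hu0]
  obtain ⟨g, hPg, hgdeg⟩ := minimal_is_central h hr J hmin hPJ hPle hPm
  have hg0 : g ≠ 0 := by
    intro hgc
    apply h.ne_zero_of_isDeg ⟨by rw [hPm]; exact one_ne_zero, hPle⟩
    rw [hPg, hgc, centralElt_zero, zero_mul]
  -- the commutative ideal
  set Φ : Polynomial (fixedSubfield σ) →+* R :=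
    Polynomial.eval₂RingHom' (ι.comp (fixedSubfield σ).subtype) (X ^ r)
      (fun a => commute_iota_Xr h hσ _) with hΦ
  have hΦapp : ∀ p, Φ p = centralElt σ ι X r p := fun p => rfl
  set J' : Ideal (Polynomial (fixedSubfield σ)) := (TwoSidedIdeal.asIdeal J).comap Φ with hJ'
  have hmemJ' : ∀ p, p ∈ J' ↔ centralElt σ ι X r p ∈ J := by
    intro p
    rw [hJ', Ideal.mem_comap, hΦapp, TwoSidedIdeal.mem_asIdeal]
  have hfJ' : f ∈ J' := (hmemJ' f).2 hNJ
  have hgYJ' : g * Polynomial.X ∈ J' := by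
    rw [hmemJ', centralElt_mul h hσ, centralElt_X]
    have he : d % r < r := Nat.mod_lt d hr0
    have h6 : centralElt σ ι X r g * X ^ r = P * X ^ (r - d % r) := by
      rw [hPg, mul_assoc, ← pow_add, Nat.add_sub_cancel' (le_of_lt he)]
    rw [h6]
    exact J.mul_mem_right _ _ hPJ
  by_cases hJtop : J' = ⊤
  · -- 1 ∈ J, so I = ⊤
    have h1J : (1 : R) ∈ J := by
      have := (hmemJ' 1).1 (hJtop ▸ Submodule.mem_top)
      rwa [centralElt_one] at this
    rw [← TwoSidedIdeal.one_mem_iff]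
    have := (hmemJ 1).1 h1J
    rwa [c.coe_one] at this
  · exfalso
    have hmax : (Ideal.span {f}).IsMaximal := PrincipalIdealRing.isMaximal_of_irreducible hirr
    have hle : Ideal.span {f} ≤ J' := (Ideal.span_le).2 (Set.singleton_subset_iff.2 hfJ')
    have hJeq : Ideal.span {f} = J' := hmax.eq_of_le hJtop hle
    have hdvdgY : f ∣ g * Polynomial.X := Ideal.mem_span_singleton.1 (hJeq ▸ hgYJ')
    have hprime : Prime f := hirr.prime
    rcases hprime.2.2 g Polynomial.X hdvdgY with hdg | hdX
    · have h7 : m ≤ g.natDegree := Polynomial.natDegree_le_of_dvd hdg hg0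
      have h8 : r * m ≤ r * g.natDegree := Nat.mul_le_mul_left r h7
      omega
    · exact hne (Polynomial.eq_of_monic_of_associated hmon Polynomial.monic_X
        (hirr.associated_of_dvd Polynomial.irreducible_X hdX))
end
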